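/- Let {𝒜_k}_{k≥1} be a sequence of labyrinth patterns with widths m_k ≥ 3 and L_∞ the resulting mixed labyrinth fractal. For x ∈ [0,1], both (x,1) ∈ L_∞ and (x,0) ∈ L_∞ hold if and only if (x,1) is the top exit of L_∞ and (x,0) is the bottom exit of L_∞; analogously, for y ∈ [0,1], both (0,y) ∈ L_∞ and (1,y) ∈ L_∞ hold if and only if (0,y) is the left exit and (1,y) is the right exit of L_∞. -/

import Mathlib

open Set

namespace Labyrinth

/-- The closed square `S_{i,j,m} = [i/m,(i+1)/m] × [j/m,(j+1)/m]` of the `m × m` grid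
on the unit square, indexed by `p = (i,j)`. -/
def cell (m : ℕ) (p : ℕ × ℕ) : Set (ℝ × ℝ) :=
  Icc ((p.1 : ℝ) / (m : ℝ)) (((p.1 : ℝ) + 1) / (m : ℝ)) ×ˢ
    Icc ((p.2 : ℝ) / (m : ℝ)) (((p.2 : ℝ) + 1) / (m : ℝ))

/-- An `m`-pattern: a nonempty set of grid indices within the `m × m` grid. -/
def IsPattern (m : ℕ) (A : Set (ℕ × ℕ)) : Prop :=
  A.Nonempty ∧ ∀ p ∈ A, p.1 < m ∧ p.2 < m

/-- Two grid squares share a side. -/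
def SideAdj (p q : ℕ × ℕ) : Prop :=
  (p.1 = q.1 ∧ (p.2 + 1 = q.2 ∨ q.2 + 1 = p.2)) ∨
  (p.2 = q.2 ∧ (p.1 + 1 = q.1 ∨ q.1 + 1 = p.1))

/-- Two grid squares share a side or a corner. -/
def CornerAdj (p q : ℕ × ℕ) : Prop :=
  SideAdj p q ∨
  ((p.1 + 1 = q.1 ∨ q.1 + 1 = p.1) ∧ (p.2 + 1 = q.2 ∨ q.2 + 1 = p.2))

/-- The graph `𝒢(𝒜)` of a pattern: vertices are its squares, two squares being
adjacent iff they share a side. -/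
def patternGraph (A : Set (ℕ × ℕ)) : SimpleGraph ↥A where
  Adj p q := SideAdj p.1 q.1
  symm := by
    constructor
    rintro ⟨p, hp⟩ ⟨q, hq⟩ h
    rcases h with ⟨h1, h2⟩ | ⟨h1, h2⟩
    · exact Or.inl ⟨h1.symm, h2.symm⟩
    · exact Or.inr ⟨h1.symm, h2.symm⟩
  loopless := by
    constructor
    rintro ⟨p, hp⟩ h
    rcases h with ⟨h1, h2 | h2⟩ | ⟨h1, h2 | h2⟩ <;> omega

/-- The four sides of a square/pattern. -/
inductive Side | top | bottom | left | right
deriving DecidableEq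

/-- `p` is an exit square of the `m`-pattern `A` on the given side. -/
def IsExitSq (m : ℕ) (A : Set (ℕ × ℕ)) : Side → ℕ × ℕ → Prop
  | .top, p => p ∈ A ∧ p.2 = m - 1 ∧ (p.1, 0) ∈ A
  | .bottom, p => p ∈ A ∧ p.2 = 0 ∧ (p.1, m - 1) ∈ A
  | .left, p => p ∈ A ∧ p.1 = 0 ∧ (m - 1, p.2) ∈ A
  | .right, p => p ∈ A ∧ p.1 = m - 1 ∧ (0, p.2) ∈ A

/-- An `m × m`-labyrinth pattern: a nonempty `m`-pattern, `m ≥ 3`, whose graph is a tree,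
with exactly one vertical and exactly one horizontal exit pair, and no two white squares
at diagonally opposite corners. -/
def IsLabyrinthPattern (m : ℕ) (A : Set (ℕ × ℕ)) : Prop :=
  3 ≤ m ∧ IsPattern m A ∧ (patternGraph A).IsTree ∧
    (∃! i : ℕ, (i, m - 1) ∈ A ∧ (i, 0) ∈ A) ∧
    (∃! j : ℕ, (0, j) ∈ A ∧ (m - 1, j) ∈ A) ∧
    ((0, 0) ∈ A → (m - 1, m - 1) ∉ A) ∧
    ((m - 1, 0) ∈ A → (0, m - 1) ∉ A)

/-- A wild labyrinth pattern: the graph is merely connected, and there is at least one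
vertical and at least one horizontal exit pair. -/
def IsWildLabyrinthPattern (m : ℕ) (A : Set (ℕ × ℕ)) : Prop :=
  3 ≤ m ∧ IsPattern m A ∧ (patternGraph A).Connected ∧
    (∃ i : ℕ, (i, m - 1) ∈ A ∧ (i, 0) ∈ A) ∧
    (∃ j : ℕ, (0, j) ∈ A ∧ (m - 1, j) ∈ A) ∧
    ((0, 0) ∈ A → (m - 1, m - 1) ∉ A) ∧
    ((m - 1, 0) ∈ A → (0, m - 1) ∉ A)

/-- One substitution step: place a copy of the pattern `A'` (of width `m'`) into each
white square of `W`. -/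
def subst (m' : ℕ) (A' W : Set (ℕ × ℕ)) : Set (ℕ × ℕ) :=
  {q | ∃ p ∈ W, ∃ r ∈ A', q = (p.1 * m' + r.1, p.2 * m' + r.2)}

/-- The white squares `𝒲_n` of level `n`; `whites m A n` is the paper's `𝒲_n`, where
`A k` is the paper's pattern `𝒜_{k+1}` of width `m k = m_{k+1}`; level `0` is the whole
unit square. -/
def whites (m : ℕ → ℕ) (A : ℕ → Set (ℕ × ℕ)) : ℕ → Set (ℕ × ℕ)
  | 0 => {(0, 0)}
  | n + 1 => subst (m n) (A n) (whites m A n)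

/-- `m(n) = m_1 ⋯ m_n`. -/
def mProd (m : ℕ → ℕ) (n : ℕ) : ℕ := ∏ k ∈ Finset.range n, m k

/-- The black squares `ℬ_n` of level `n`. -/
def blacks (m : ℕ → ℕ) (A : ℕ → Set (ℕ × ℕ)) (n : ℕ) : Set (ℕ × ℕ) :=
  {p : ℕ × ℕ | p.1 < mProd m n ∧ p.2 < mProd m n} \ whites m A n

/-- A border square of the `m × m` grid. -/
def IsBorder (m : ℕ) (p : ℕ × ℕ) : Prop :=
  p.1 = 0 ∨ p.2 = 0 ∨ p.1 = m - 1 ∨ p.2 = m - 1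

/-- `L_n`, the union of the white squares of level `n`. -/
def levelSet (m : ℕ → ℕ) (A : ℕ → Set (ℕ × ℕ)) (n : ℕ) : Set (ℝ × ℝ) :=
  ⋃ p ∈ whites m A n, cell (mProd m n) p

/-- `L_∞ = ⋂_{n ≥ 1} L_n` (the term `n = 0` is the whole unit square). -/
def limitSet (m : ℕ → ℕ) (A : ℕ → Set (ℕ × ℕ)) : Set (ℝ × ℝ) :=
  ⋂ n, levelSet m A n

def unitSquare : Set (ℝ × ℝ) := Icc (0 : ℝ) 1 ×ˢ Icc (0 : ℝ) 1

/-- A path in a graph (with adjacency `Adj`, within the vertex set `A`)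
from `u` to `v`: a nonempty list of distinct, consecutively adjacent squares of `A`,
starting at `u` and ending at `v`. -/
def IsPathIn (Adj : ℕ × ℕ → ℕ × ℕ → Prop) (A : Set (ℕ × ℕ))
    (l : List (ℕ × ℕ)) (u v : ℕ × ℕ) : Prop :=
  l ≠ [] ∧ l.Nodup ∧ l.Chain' Adj ∧ (∀ p ∈ l, p ∈ A) ∧
    l.head? = some u ∧ l.getLast? = some v

/-- `s` is an arc between `a` and `b`: a homeomorphic image of `[0,1]`
with endpoints `a` and `b`. -/
def IsArc (s : Set (ℝ × ℝ)) (a b : ℝ × ℝ) : Prop :=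
  ∃ f : ℝ → ℝ × ℝ, ContinuousOn f (Icc 0 1) ∧ InjOn f (Icc 0 1) ∧
    f '' Icc 0 1 = s ∧ f 0 = a ∧ f 1 = b

/-- `e` is the exit point of `L_∞` of the given type: for every `n ≥ 1` it lies in the
exit square of that type of `𝒲_n`. -/
def IsExitPoint (m : ℕ → ℕ) (A : ℕ → Set (ℕ × ℕ)) (s : Side) (e : ℝ × ℝ) : Prop :=
  ∀ n, 1 ≤ n → ∃ p, IsExitSq (mProd m n) (whites m A n) s p ∧ e ∈ cell (mProd m n) p

/-- The (closed) edge of the grid square `p` of the `m × m` grid on the given side. -/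
def cellEdge (m : ℕ) (p : ℕ × ℕ) : Side → Set (ℝ × ℝ)
  | .top => Icc ((p.1 : ℝ) / (m : ℝ)) (((p.1 : ℝ) + 1) / (m : ℝ)) ×ˢ {((p.2 : ℝ) + 1) / (m : ℝ)}
  | .bottom => Icc ((p.1 : ℝ) / (m : ℝ)) (((p.1 : ℝ) + 1) / (m : ℝ)) ×ˢ {(p.2 : ℝ) / (m : ℝ)}
  | .left => {(p.1 : ℝ) / (m : ℝ)} ×ˢ Icc ((p.2 : ℝ) / (m : ℝ)) (((p.2 : ℝ) + 1) / (m : ℝ))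
  | .right => {((p.1 : ℝ) + 1) / (m : ℝ)} ×ˢ Icc ((p.2 : ℝ) / (m : ℝ)) (((p.2 : ℝ) + 1) / (m : ℝ))

/-- Directions in the grid. -/
inductive Dir | up | down | left | right
deriving DecidableEq

/-- `stepDir p q d`: the square `q` is the neighbour of `p` in direction `d`. -/
def stepDir (p q : ℕ × ℕ) : Dir → Prop
  | .up => q.1 = p.1 ∧ q.2 = p.2 + 1
  | .down => q.1 = p.1 ∧ p.2 = q.2 + 1
  | .left => q.2 = p.2 ∧ p.1 = q.1 + 1
  | .right => q.2 = p.2 ∧ q.1 = p.1 + 1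

/-- The outward direction through a given side. -/
def outDir : Side → Dir
  | .top => .up
  | .bottom => .down
  | .left => .left
  | .right => .right

def sideOfDir : Dir → Side
  | .up => .top
  | .down => .bottom
  | .left => .left
  | .right => .right

/-- The six types `A, B, C, D, E, F` of paths (and of squares within a path). -/
inductive PTy | A | B | C | D | E | F
deriving DecidableEq

instance : Fintype PTy where
  elems := {PTy.A, PTy.B, PTy.C, PTy.D, PTy.E, PTy.F}
  complete := by intro x; cases x <;> simp

/-- The exit at which the `x`-path starts: `A`: top→bottom, `B`: left→right,
`C`: top→right, `D`: right→bottom, `E`: bottom→left, `F`: left→top. -/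
def startSide : PTy → Side
  | .A => .top
  | .B => .left
  | .C => .top
  | .D => .right
  | .E => .bottom
  | .F => .left

/-- The exit at which the `x`-path ends. -/
def endSide : PTy → Side
  | .A => .bottom
  | .B => .right
  | .C => .right
  | .D => .bottom
  | .E => .left
  | .F => .top

/-- The two neighbour directions characterising a square of each type. -/
def ptyDirPair : PTy → Dir × Dir
  | .A => (.up, .down)
  | .B => (.left, .right)
  | .C => (.up, .right)
  | .D => (.right, .down)
  | .E => (.down, .left)
  | .F => (.left, .up)

def ptyDirs (τ : PTy) : Set Dir := {(ptyDirPair τ).1, (ptyDirPair τ).2}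

/-- The set of directions from the `i`-th square of the path `l` towards its neighbours
within the path, where the first and last squares (exit squares) are regarded as having
an additional neighbour outside the unit square, in directions `dstart`, `dend`
respectively. -/
def pathDirs (l : List (ℕ × ℕ)) (dstart dend : Dir) (i : ℕ) : Set Dir :=
  {d | (∃ p q, l[i]? = some p ∧ l[i - 1]? = some q ∧ 0 < i ∧ stepDir p q d)
    ∨ (∃ p q, l[i]? = some p ∧ l[i + 1]? = some q ∧ stepDir p q d)
    ∨ (i = 0 ∧ d = dstart)
    ∨ (i + 1 = l.length ∧ d = dend)}

/-- The number of `τ`-squares of the path `l` (with outward exit directions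
`dstart`, `dend`). -/
noncomputable def countTy (l : List (ℕ × ℕ)) (dstart dend : Dir) (τ : PTy) : ℕ :=
  {i | i < l.length ∧ pathDirs l dstart dend i = ptyDirs τ}.ncard

/-- `M(n) = M_1 ⋅ M_2 ⋅ ⋯ ⋅ M_n`. -/
def matProd (M : ℕ → Matrix PTy PTy ℕ) (n : ℕ) : Matrix PTy PTy ℕ :=
  ((List.range n).map M).prod

/-- A simple closed curve: a subspace homeomorphic to the circle. -/
def IsSimpleClosedCurve (s : Set (ℝ × ℝ)) : Prop :=
  Nonempty (↥s ≃ₜ AddCircle (1 : ℝ))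

/-- The number of `δ`-mesh squares meeting `E`. -/
noncomputable def meshCount (δ : ℝ) (E : Set (ℝ × ℝ)) : ℕ :=
  {q : ℤ × ℤ | (E ∩ (Icc ((q.1 : ℝ) * δ) (((q.1 : ℝ) + 1) * δ) ×ˢ
      Icc ((q.2 : ℝ) * δ) (((q.2 : ℝ) + 1) * δ))).Nonempty}.ncard

/-- The lower box-counting dimension of `E ⊆ ℝ²`. -/
noncomputable def lowerBoxDim (E : Set (ℝ × ℝ)) : ℝ :=
  Filter.liminf (fun δ : ℝ => Real.log (meshCount δ E) / (-Real.log δ)) (nhdsWithin 0 (Ioi 0))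

/-- The upper box-counting dimension of `E ⊆ ℝ²`. -/
noncomputable def upperBoxDim (E : Set (ℝ × ℝ)) : ℝ :=
  Filter.limsup (fun δ : ℝ => Real.log (meshCount δ E) / (-Real.log δ)) (nhdsWithin 0 (Ioi 0))

/-! If `(x, 1)` and `(x, 0)` lie in `L_∞`, then at level `n + 1` some white square of the top
row and some white square of the bottom row contain `x` in their columns, and these columns are
equal or adjacent. Were they in different columns of level `n`, the two squares would occupy
diagonally opposite corners of the pattern `𝒜_{n+1}`, which a labyrinth pattern forbids. So
their common parent column carries a vertical exit pair of `𝒲_n` whose squares contain `(x, 1)`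
and `(x, 0)`. The horizontal case is the vertical one for the transposed patterns. -/

/-- `cell M (i, j)` is definitionally `gridIcc M i ×ˢ gridIcc M j`. -/
def gridIcc (M i : ℕ) : Set ℝ :=
  Icc ((i : ℝ) / M) (((i : ℝ) + 1) / M)

/-- Condition (3) of a labyrinth pattern. -/
def NoOppositeCorners (m : ℕ) (A : Set (ℕ × ℕ)) : Prop :=
  ((0, 0) ∈ A → (m - 1, m - 1) ∉ A) ∧ ((m - 1, 0) ∈ A → (0, m - 1) ∉ A)

def Side.transpose : Side → Side
  | .top => .right
  | .bottom => .left
  | .left => .bottom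
  | .right => .top

section Grid

variable {M i j : ℕ} {x : ℝ}

lemma mem_gridIcc_iff (hM : 0 < M) : x ∈ gridIcc M i ↔ (i : ℝ) ≤ x * M ∧ x * M ≤ i + 1 := by
  have hM' : (0 : ℝ) < M := by exact_mod_cast hM
  rw [gridIcc, mem_Icc, div_le_iff₀ hM', le_div_iff₀ hM']

lemma one_mem_gridIcc_iff (hM : 0 < M) (hi : i < M) : (1 : ℝ) ∈ gridIcc M i ↔ i = M - 1 := by
  rw [mem_gridIcc_iff hM, one_mul]
  constructor
  · rintro ⟨-, h⟩
    have : M ≤ i + 1 := by exact_mod_cast h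
    omega
  · rintro rfl
    rw [Nat.cast_sub hM]
    push_cast
    constructor <;> linarith

lemma zero_mem_gridIcc_iff (hM : 0 < M) : (0 : ℝ) ∈ gridIcc M i ↔ i = 0 := by
  rw [mem_gridIcc_iff hM, zero_mul]
  constructor
  · rintro ⟨h, -⟩
    exact_mod_cast h.antisymm i.cast_nonneg
  · rintro rfl
    norm_num

lemma le_succ_of_mem_gridIcc (hM : 0 < M) (hi : x ∈ gridIcc M i) (hj : x ∈ gridIcc M j) :
    i ≤ j + 1 := by
  rw [mem_gridIcc_iff hM] at hi hj
  exact_mod_cast hi.1.trans hj.2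

lemma gridIcc_mul_subset (hM : 0 < M) {b : ℕ} (hb : 0 < b) :
    gridIcc (M * b) i ⊆ gridIcc M (i / b) := by
  intro x hx
  have hb' : (0 : ℝ) < b := by exact_mod_cast hb
  rw [mem_gridIcc_iff (Nat.mul_pos hM hb), Nat.cast_mul, ← mul_assoc] at hx
  rw [mem_gridIcc_iff hM]
  have hlo : ((i / b * b : ℕ) : ℝ) ≤ i := by exact_mod_cast Nat.div_mul_le_self i b
  have hhi : ((i + 1 : ℕ) : ℝ) ≤ (i / b * b + b : ℕ) := by
    exact_mod_cast Nat.lt_div_mul_add hb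
  push_cast at hlo hhi
  constructor
  · exact le_of_mul_le_mul_right (by linarith) hb'
  · exact le_of_mul_le_mul_right (by linarith) hb'

end Grid

lemma div_eq_div_or_mod_eq_of_le_succ {i j b : ℕ} (hb : 0 < b) (hij : i ≤ j + 1)
    (hji : j ≤ i + 1) :
    i / b = j / b ∨ (i % b = b - 1 ∧ j % b = 0) ∨ (i % b = 0 ∧ j % b = b - 1) := by
  have hi := Nat.div_add_mod i b
  have hj := Nat.div_add_mod j b
  have hri := Nat.mod_lt i hb
  have hrj := Nat.mod_lt j hb
  rcases lt_trichotomy (i / b) (j / b) with h | h | h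
  · have := Nat.mul_le_mul_left b (Nat.succ_le_of_lt h)
    rw [Nat.mul_succ] at this
    omega
  · exact Or.inl h
  · have := Nat.mul_le_mul_left b (Nat.succ_le_of_lt h)
    rw [Nat.mul_succ] at this
    omega

lemma mul_sub_one_div_mod {a b : ℕ} (ha : 0 < a) (hb : 0 < b) :
    (a * b - 1) / b = a - 1 ∧ (a * b - 1) % b = b - 1 := by
  obtain ⟨a, rfl⟩ : ∃ a', a = a' + 1 := ⟨a - 1, by omega⟩
  have h : (a + 1) * b - 1 = b - 1 + a * b := by rw [add_mul, one_mul]; omega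
  have hlt : b - 1 < b := Nat.sub_lt hb one_pos
  rw [h, Nat.add_mul_div_right _ _ hb, Nat.add_mul_mod_self_right,
    Nat.div_eq_of_lt hlt, Nat.mod_eq_of_lt hlt]
  exact ⟨by simp, rfl⟩

lemma IsPattern.width_pos {m : ℕ} {A : Set (ℕ × ℕ)} (h : IsPattern m A) : 0 < m := by
  obtain ⟨p, hp⟩ := h.1
  exact (Nat.zero_le _).trans_lt (h.2 p hp).1

lemma IsExitSq.mem {M : ℕ} {W : Set (ℕ × ℕ)} {s : Side} {p : ℕ × ℕ} (h : IsExitSq M W s p) :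
    p ∈ W := by
  cases s <;> exact h.1

section Levels

variable {m : ℕ → ℕ} {A : ℕ → Set (ℕ × ℕ)} {n : ℕ}

lemma mProd_succ : mProd m (n + 1) = mProd m n * m n :=
  Finset.prod_range_succ _ _

lemma mProd_pos (hA : ∀ k, IsPattern (m k) (A k)) (n : ℕ) : 0 < mProd m n :=
  Finset.prod_pos fun k _ => (hA k).width_pos

lemma levelSet_zero : levelSet m A 0 = unitSquare := by
  simp [levelSet, whites, mProd, cell, unitSquare]

lemma lt_of_mem_whites (hA : ∀ k, IsPattern (m k) (A k)) {p : ℕ × ℕ} (hp : p ∈ whites m A n) :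
    p.1 < mProd m n ∧ p.2 < mProd m n := by
  induction n generalizing p with
  | zero =>
    rw [whites, mem_singleton_iff] at hp
    simp [hp, mProd]
  | succ n ih =>
    obtain ⟨q, hq, r, hr, rfl⟩ := hp
    have hq' := ih hq
    have hr' := (hA n).2 r hr
    rw [mProd_succ]
    constructor
    · nlinarith
    · nlinarith

lemma mem_whites_succ (hA : ∀ k, IsPattern (m k) (A k)) {q : ℕ × ℕ} :
    q ∈ whites m A (n + 1) ↔
      (q.1 / m n, q.2 / m n) ∈ whites m A n ∧ (q.1 % m n, q.2 % m n) ∈ A n := by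
  have hb := (hA n).width_pos
  constructor
  · rintro ⟨p, hp, r, hr, rfl⟩
    have hr' := (hA n).2 r hr
    simpa [Nat.add_mul_div_right, Nat.add_mul_mod_self_right, Nat.div_eq_of_lt, Nat.mod_eq_of_lt,
      hb, hr'.1, hr'.2, add_comm] using And.intro hp hr
  · rintro ⟨hp, hr⟩
    exact ⟨_, hp, _, hr, Prod.ext (Nat.div_add_mod' q.1 (m n)).symm
      (Nat.div_add_mod' q.2 (m n)).symm⟩

lemma exists_top_of_mem_levelSet (hA : ∀ k, IsPattern (m k) (A k)) {x : ℝ}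
    (h : (x, 1) ∈ levelSet m A n) :
    ∃ i, (i, mProd m n - 1) ∈ whites m A n ∧ x ∈ gridIcc (mProd m n) i := by
  obtain ⟨⟨i, j⟩, hp, hc⟩ := mem_iUnion₂.1 h
  obtain rfl := (one_mem_gridIcc_iff (mProd_pos hA n) (lt_of_mem_whites hA hp).2).1 hc.2
  exact ⟨i, hp, hc.1⟩

lemma exists_bottom_of_mem_levelSet (hA : ∀ k, IsPattern (m k) (A k)) {x : ℝ}
    (h : (x, 0) ∈ levelSet m A n) :
    ∃ i, (i, 0) ∈ whites m A n ∧ x ∈ gridIcc (mProd m n) i := by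
  obtain ⟨⟨i, j⟩, hp, hc⟩ := mem_iUnion₂.1 h
  obtain rfl := (zero_mem_gridIcc_iff (mProd_pos hA n)).1 hc.2
  exact ⟨i, hp, hc.1⟩

lemma exists_vertical_exit_pair (hA : ∀ k, IsPattern (m k) (A k))
    (hcorner : ∀ k, NoOppositeCorners (m k) (A k)) {x : ℝ}
    (h1 : (x, 1) ∈ levelSet m A (n + 1)) (h0 : (x, 0) ∈ levelSet m A (n + 1)) :
    ∃ i, (i, mProd m n - 1) ∈ whites m A n ∧ (i, 0) ∈ whites m A n ∧
      x ∈ gridIcc (mProd m n) i := by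
  have hM := mProd_pos hA n
  have hb := (hA n).width_pos
  obtain ⟨i, hiW, hix⟩ := exists_top_of_mem_levelSet hA h1
  obtain ⟨j, hjW, hjx⟩ := exists_bottom_of_mem_levelSet hA h0
  rw [mProd_succ] at hiW hix hjx
  obtain ⟨hrow_div, hrow_mod⟩ := mul_sub_one_div_mod hM hb
  rw [mem_whites_succ hA] at hiW hjW
  simp only [hrow_div, hrow_mod, Nat.zero_div, Nat.zero_mod] at hiW hjW
  -- adjacent columns with different parents meet opposite corners of `A n`
  have hparent : i / m n = j / m n := by
    rcases div_eq_div_or_mod_eq_of_le_succ hb (le_succ_of_mem_gridIcc (by positivity) hix hjx)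
      (le_succ_of_mem_gridIcc (by positivity) hjx hix) with h | ⟨hi, hj⟩ | ⟨hi, hj⟩
    · exact h
    · rw [hi] at hiW
      rw [hj] at hjW
      exact absurd hiW.2 ((hcorner n).1 hjW.2)
    · rw [hi] at hiW
      rw [hj] at hjW
      exact absurd hiW.2 ((hcorner n).2 hjW.2)
  exact ⟨i / m n, hiW.1, hparent ▸ hjW.1, gridIcc_mul_subset hM hb hix⟩

lemma isExitPoint_top_bottom_of_mem_limitSet (hA : ∀ k, IsPattern (m k) (A k))
    (hcorner : ∀ k, NoOppositeCorners (m k) (A k)) {x : ℝ}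
    (h1 : (x, 1) ∈ limitSet m A) (h0 : (x, 0) ∈ limitSet m A) :
    IsExitPoint m A .top (x, 1) ∧ IsExitPoint m A .bottom (x, 0) := by
  have hpair (n : ℕ) := exists_vertical_exit_pair hA hcorner (mem_iInter.1 h1 (n + 1))
    (mem_iInter.1 h0 (n + 1))
  constructor
  · intro n _
    obtain ⟨i, hiT, hiB, hix⟩ := hpair n
    have hM := mProd_pos hA n
    exact ⟨(i, mProd m n - 1), ⟨hiT, rfl, hiB⟩, hix,
      (one_mem_gridIcc_iff hM (Nat.sub_lt hM one_pos)).2 rfl⟩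
  · intro n _
    obtain ⟨i, hiT, hiB, hix⟩ := hpair n
    exact ⟨(i, 0), ⟨hiB, rfl, hiT⟩, hix, (zero_mem_gridIcc_iff (mProd_pos hA n)).2 rfl⟩

lemma IsExitPoint.mem_limitSet {s : Side} {e : ℝ × ℝ} (h : IsExitPoint m A s e)
    (he : e ∈ unitSquare) : e ∈ limitSet m A := by
  refine mem_iInter.2 fun n => ?_
  rcases n with _ | n
  · rwa [levelSet_zero]
  · obtain ⟨p, hp, hep⟩ := h (n + 1) n.succ_pos
    exact mem_biUnion hp.mem hep

end Levels

lemma IsPattern.preimage_swap {m : ℕ} {A : Set (ℕ × ℕ)} (h : IsPattern m A) :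
    IsPattern m (Prod.swap ⁻¹' A) := by
  obtain ⟨⟨p, hp⟩, hlt⟩ := h
  exact ⟨⟨p.swap, by simpa using hp⟩, fun q hq => (hlt q.swap hq).symm⟩

lemma NoOppositeCorners.preimage_swap {m : ℕ} {A : Set (ℕ × ℕ)} (h : NoOppositeCorners m A) :
    NoOppositeCorners m (Prod.swap ⁻¹' A) :=
  ⟨h.1, fun h1 h2 => h.2 h2 h1⟩

lemma swap_mem_cell_swap {M : ℕ} {p : ℕ × ℕ} {z : ℝ × ℝ} :
    z.swap ∈ cell M p.swap ↔ z ∈ cell M p :=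
  and_comm

lemma subst_preimage_swap (m' : ℕ) (A' W : Set (ℕ × ℕ)) :
    subst m' (Prod.swap ⁻¹' A') (Prod.swap ⁻¹' W) = Prod.swap ⁻¹' subst m' A' W := by
  ext q
  constructor
  · rintro ⟨p, hp, r, hr, rfl⟩
    exact ⟨p.swap, hp, r.swap, hr, rfl⟩
  · rintro ⟨p, hp, r, hr, hq⟩
    exact ⟨p.swap, hp, r.swap, hr, congrArg Prod.swap hq⟩

lemma isExitSq_preimage_swap (M : ℕ) (W : Set (ℕ × ℕ)) (s : Side) (p : ℕ × ℕ) :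
    IsExitSq M (Prod.swap ⁻¹' W) s p ↔ IsExitSq M W s.transpose p.swap := by
  cases s <;> rfl

section Transpose

variable {m : ℕ → ℕ} {A : ℕ → Set (ℕ × ℕ)}

lemma whites_preimage_swap (n : ℕ) :
    whites m (fun k => Prod.swap ⁻¹' A k) n = Prod.swap ⁻¹' whites m A n := by
  induction n with
  | zero => ext ⟨i, j⟩; simp [whites, and_comm]
  | succ n ih => rw [whites, whites, ih, subst_preimage_swap]

lemma levelSet_preimage_swap (n : ℕ) :
    levelSet m (fun k => Prod.swap ⁻¹' A k) n = Prod.swap ⁻¹' levelSet m A n := by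
  ext z
  simp only [levelSet, whites_preimage_swap, mem_iUnion₂, mem_preimage]
  constructor
  · rintro ⟨p, hp, hz⟩
    exact ⟨p.swap, hp, swap_mem_cell_swap.2 hz⟩
  · rintro ⟨p, hp, hz⟩
    exact ⟨p.swap, by rwa [Prod.swap_swap], swap_mem_cell_swap.1 (by rwa [Prod.swap_swap])⟩

lemma limitSet_preimage_swap :
    limitSet m (fun k => Prod.swap ⁻¹' A k) = Prod.swap ⁻¹' limitSet m A := by
  simp only [limitSet, levelSet_preimage_swap, preimage_iInter]

lemma isExitPoint_preimage_swap (s : Side) (e : ℝ × ℝ) :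
    IsExitPoint m (fun k => Prod.swap ⁻¹' A k) s e ↔ IsExitPoint m A s.transpose e.swap := by
  refine forall₂_congr fun n _ => ?_
  rw [whites_preimage_swap]
  constructor
  · rintro ⟨p, hp, he⟩
    exact ⟨p.swap, (isExitSq_preimage_swap _ _ _ _).1 hp, swap_mem_cell_swap.2 he⟩
  · rintro ⟨p, hp, he⟩
    refine ⟨p.swap, (isExitSq_preimage_swap _ _ _ _).2 (by rwa [Prod.swap_swap]), ?_⟩
    exact swap_mem_cell_swap.1 (by rwa [Prod.swap_swap])

lemma isExitPoint_left_right_of_mem_limitSet (hA : ∀ k, IsPattern (m k) (A k))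
    (hcorner : ∀ k, NoOppositeCorners (m k) (A k)) {y : ℝ}
    (h0 : (0, y) ∈ limitSet m A) (h1 : (1, y) ∈ limitSet m A) :
    IsExitPoint m A .left (0, y) ∧ IsExitPoint m A .right (1, y) := by
  have h := isExitPoint_top_bottom_of_mem_limitSet (A := fun k => Prod.swap ⁻¹' A k)
    (fun k => (hA k).preimage_swap) (fun k => (hcorner k).preimage_swap)
    (x := y) (by rwa [limitSet_preimage_swap]) (by rwa [limitSet_preimage_swap])
  rw [isExitPoint_preimage_swap, isExitPoint_preimage_swap] at h
  exact h.symm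

end Transpose

end Labyrinth

open Labyrinth in
/-- for `x ∈ [0,1]`, both `(x,1) ∈ L_∞` and `(x,0) ∈ L_∞` hold iff `(x,1)`
is the top exit and `(x,0)` the bottom exit of `L_∞`; analogously for `(0,y), (1,y)` and
the left and right exits. -/
theorem boundary_points_are_exits (m : ℕ → ℕ) (A : ℕ → Set (ℕ × ℕ))
    (hlab : ∀ k, IsLabyrinthPattern (m k) (A k)) :
    (∀ x : ℝ, x ∈ Set.Icc (0 : ℝ) 1 →
      (((x, (1 : ℝ)) ∈ limitSet m A ∧ (x, (0 : ℝ)) ∈ limitSet m A) ↔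
        (IsExitPoint m A Side.top (x, 1) ∧ IsExitPoint m A Side.bottom (x, 0)))) ∧
    (∀ y : ℝ, y ∈ Set.Icc (0 : ℝ) 1 →
      ((((0 : ℝ), y) ∈ limitSet m A ∧ ((1 : ℝ), y) ∈ limitSet m A) ↔
        (IsExitPoint m A Side.left (0, y) ∧ IsExitPoint m A Side.right (1, y)))) := by
  have hA k : IsPattern (m k) (A k) := (hlab k).2.1
  have hcorner k : NoOppositeCorners (m k) (A k) := (hlab k).2.2.2.2.2
  refine ⟨fun x hx => ⟨fun h => isExitPoint_top_bottom_of_mem_limitSet hA hcorner h.1 h.2,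
      fun h => ⟨h.1.mem_limitSet ⟨hx, by norm_num⟩, h.2.mem_limitSet ⟨hx, by norm_num⟩⟩⟩,
    fun y hy => ⟨fun h => isExitPoint_left_right_of_mem_limitSet hA hcorner h.1 h.2,
      fun h => ⟨h.1.mem_limitSet ⟨by norm_num, hy⟩, h.2.mem_limitSet ⟨by norm_num, hy⟩⟩⟩⟩
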